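/- arXiv:1006.1095 — 2 statements merged into one kernel-verified Lean document; each statement's English description precedes it below -/
import Mathlib

section
/- Let (X, δ) be a diversity and f ∈ T_X. Then: (1) f(A) ≥ δ(A) for all finite A ⊆ X; (2) f is monotone, i.e. f(A) ≤ f(B) whenever A ⊆ B ⊆ X with B finite; (3) f is sub-additive, i.e. f(A ∪ B) ≤ f(A) + f(B) for all finite A, B ⊆ X. -/
/-!
Minimality is exploited by perturbing a single value: if every collection containing `A`
already has its `δ`-bound with `f A` replaced by some `v ≥ 0`, then lowering `f A` to
`min (f A) v` stays in `P_X`, so by minimality `f A ≤ v`. For monotonicity take `v = f B`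
with `A ⊆ B` (using that `δ` is monotone), for sub-additivity take `v = f A + f B`
(splitting `A ∪ B` into two members of the collection).
-/

open scoped Classical

noncomputable section

/-- A diversity: axioms (D1) and (D2). -/
def IsDiversity {X : Type*} (δ : Finset X → ℝ) : Prop :=
  (∀ A, 0 ≤ δ A) ∧ (∀ A, δ A = 0 ↔ A.card ≤ 1) ∧
    ∀ A B C : Finset X, B ≠ ∅ → δ (A ∪ C) ≤ δ (A ∪ B) + δ (B ∪ C)

/-- Membership in `P_X`: `f ∅ = 0` and `Σ_{A ∈ 𝓐} f A ≥ δ (⋃ 𝓐)` for every finite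
collection `𝓐` of finite subsets of `X`. -/
def MemP {X : Type*} (δ : Finset X → ℝ) (f : Finset X → ℝ) : Prop :=
  f ∅ = 0 ∧ ∀ 𝓐 : Finset (Finset X), δ (𝓐.sup id) ≤ ∑ A ∈ 𝓐, f A

/-- Membership in the tight span `T_X`: the pointwise-minimal elements of `P_X`. -/
def MemT {X : Type*} (δ : Finset X → ℝ) (f : Finset X → ℝ) : Prop :=
  MemP δ f ∧ ∀ g : Finset X → ℝ, MemP δ g → (∀ A, g A ≤ f A) → g = f

theorem Finset.sum_insert_le_add {ι M : Type*} [AddCommMonoid M] [PartialOrder M]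
    [IsOrderedAddMonoid M] [DecidableEq ι] {f : ι → M} (hf : ∀ i, 0 ≤ f i) (a : ι)
    (s : Finset ι) : ∑ i ∈ insert a s, f i ≤ f a + ∑ i ∈ s, f i := by
  by_cases ha : a ∈ s
  · rw [Finset.insert_eq_of_mem ha]
    exact le_add_of_nonneg_left (hf a)
  · rw [Finset.sum_insert ha]

theorem IsDiversity.monotone {X : Type*} {δ : Finset X → ℝ} (hδ : IsDiversity δ) :
    Monotone δ := by
  refine Finset.monotone_iff_forall_le_insert.2 fun A b _ => ?_
  have hb : δ {b} = 0 := (hδ.2.1 {b}).2 (Finset.card_singleton b).le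
  have htriangle := hδ.2.2 A {b} ∅ (Finset.singleton_ne_empty b)
  rwa [Finset.union_empty, Finset.union_empty, hb, add_zero, Finset.union_comm,
    ← Finset.insert_eq] at htriangle

namespace MemP

variable {X : Type*} {δ f : Finset X → ℝ}

theorem le (hf : MemP δ f) (A : Finset X) : δ A ≤ f A := by
  simpa using hf.2 {A}

theorem nonneg (hδ : ∀ A, 0 ≤ δ A) (hf : MemP δ f) (A : Finset X) : 0 ≤ f A :=
  (hδ A).trans (hf.le A)

theorem sup_insert_le (hδ : ∀ A, 0 ≤ δ A) (hf : MemP δ f) (A : Finset X)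
    (S : Finset (Finset X)) : δ ((insert A S).sup id) ≤ f A + ∑ C ∈ S, f C :=
  (hf.2 _).trans (Finset.sum_insert_le_add (hf.nonneg hδ) A S)

theorem update_min {A : Finset X} {v : ℝ} (hf : MemP δ f) (hv : 0 ≤ v)
    (h : ∀ S : Finset (Finset X), δ ((insert A S).sup id) ≤ v + ∑ C ∈ S, f C) :
    MemP δ (Function.update f A (min (f A) v)) := by
  refine ⟨?_, fun 𝓐 => ?_⟩
  · rw [Function.update_apply]
    split_ifs with hA
    · rw [← hA, hf.1, min_eq_left hv]
    · exact hf.1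
  by_cases hA : A ∈ 𝓐
  · have hf𝓐 := hf.2 𝓐
    have hv𝓐 := h (𝓐.erase A)
    rw [← Finset.add_sum_erase 𝓐 f hA] at hf𝓐
    rw [Finset.insert_erase hA] at hv𝓐
    rw [Finset.sum_update_of_mem hA, Finset.sdiff_singleton_eq_erase, ← min_add_add_right]
    exact le_min hf𝓐 hv𝓐
  · rw [Finset.sum_update_of_notMem hA]
    exact hf.2 𝓐

end MemP

theorem MemT.le_of_forall_sup_insert_le {X : Type*} {δ f : Finset X → ℝ} (hf : MemT δ f)
    {A : Finset X} {v : ℝ} (hv : 0 ≤ v)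
    (h : ∀ S : Finset (Finset X), δ ((insert A S).sup id) ≤ v + ∑ C ∈ S, f C) :
    f A ≤ v := by
  have hupdate := hf.2 _ (hf.1.update_min hv h) (update_le_self_iff.2 (min_le_left _ _))
  have hA := congrFun hupdate A
  rw [Function.update_self] at hA
  exact min_eq_left_iff.1 hA

/-- if `f ∈ T_X` then (1) `f A ≥ δ A`; (2) `f` is monotone;
(3) `f` is sub-additive. -/
theorem tightSpan_member_basics {X : Type*} (δ : Finset X → ℝ) (hδ : IsDiversity δ)
    (f : Finset X → ℝ) (hf : MemT δ f) :
    (∀ A : Finset X, δ A ≤ f A) ∧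
    (∀ A B : Finset X, A ⊆ B → f A ≤ f B) ∧
    (∀ A B : Finset X, f (A ∪ B) ≤ f A + f B) := by
  have hnonneg := hf.1.nonneg hδ.1
  refine ⟨hf.1.le, fun A B hAB => ?_, fun A B => ?_⟩
  · refine hf.le_of_forall_sup_insert_le (hnonneg B) fun S => ?_
    have hsub : (insert A S).sup id ⊆ (insert B S).sup id := by
      simpa using Finset.union_subset_union_left hAB
    exact (hδ.monotone hsub).trans (hf.1.sup_insert_le hδ.1 B S)
  · refine hf.le_of_forall_sup_insert_le (add_nonneg (hnonneg A) (hnonneg B)) fun S => ?_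
    calc δ ((insert (A ∪ B) S).sup id) = δ ((insert A (insert B S)).sup id) := by simp
      _ ≤ f A + ∑ C ∈ insert B S, f C := hf.1.sup_insert_le hδ.1 A _
      _ ≤ f A + (f B + ∑ C ∈ S, f C) :=
          add_le_add_right (Finset.sum_insert_le_add hnonneg B S) _
      _ = f A + f B + ∑ C ∈ S, f C := (add_assoc _ _ _).symm

end
end

section
/- Let (X, δ) be a diversity. The map κ sending each x ∈ X to the function h_x (where h_x(A) = δ(A ∪ {x}) for finite A ⊆ X) maps X into T_X, is injective, and satisfies δ_T(κ(Y)) = δ(Y) for every finite Y ⊆ X; that is, κ is an embedding of (X, δ) into (T_X, δ_T). -/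
open scoped Classical

noncomputable section

/-- The function `δ_T` on finite subsets of the tight span: `δ_T ∅ = 0` and for nonempty `F`,
`δ_T F = sup { δ(⋃𝓐) - Σ_{A ∈ 𝓐} inf_{f ∈ F} f A : 𝓐 a finite collection of finite subsets }`. -/
noncomputable def deltaT {X : Type*} (δ : Finset X → ℝ) (F : Finset (Finset X → ℝ)) : ℝ :=
  if F = ∅ then 0
  else sSup {r : ℝ | ∃ 𝓐 : Finset (Finset X),
    r = δ (𝓐.sup id) - ∑ A ∈ 𝓐, sInf ((fun f => f A) '' (F : Set (Finset X → ℝ)))}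

/-- The Kuratowski-type map `κ` sends `x` to the function `h_x : A ↦ δ (A ∪ {x})`. -/
def hfun {X : Type*} (δ : Finset X → ℝ) (x : X) : Finset X → ℝ :=
  fun A => δ (A ∪ {x})

/-!
`h_x` lies in `P_X` by chaining (D2) through `x`, and it is minimal: any `g ⪯ h_x` in `P_X` has
`g {x} = 0`, so `δ (A ∪ {x}) ≤ g A + g {x} = g A`. For `δ_T (κ Y)`, the infimum of `h_y A` over
`y ∈ Y` is attained at some `c A ∈ Y`, and chaining (D2) through these points gives
`δ (⋃ 𝓐) ≤ δ Y + Σ_{A ∈ 𝓐} δ (A ∪ {c A})`; the singletons of `Y` attain this bound.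
-/

namespace IsDiversity

variable {X : Type*} {δ : Finset X → ℝ}

theorem nonneg (hδ : IsDiversity δ) (A : Finset X) : 0 ≤ δ A := hδ.1 A

theorem apply_singleton (hδ : IsDiversity δ) (x : X) : δ {x} = 0 := (hδ.2.1 _).mpr (by simp)

theorem apply_empty (hδ : IsDiversity δ) : δ ∅ = 0 := (hδ.2.1 _).mpr (by simp)

theorem triangle (hδ : IsDiversity δ) (A C : Finset X) {B : Finset X} (hB : B ≠ ∅) :
    δ (A ∪ C) ≤ δ (A ∪ B) + δ (B ∪ C) :=
  hδ.2.2 A B C hB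

theorem le_insert (hδ : IsDiversity δ) (A : Finset X) (b : X) : δ A ≤ δ (insert b A) := by
  have h := hδ.triangle A ∅ (B := {b}) (by simp)
  rw [Finset.union_empty, Finset.union_empty, hδ.apply_singleton, add_zero,
    Finset.union_comm, ← Finset.insert_eq] at h
  exact h

theorem le_union_left (hδ : IsDiversity δ) (A C : Finset X) : δ A ≤ δ (A ∪ C) := by
  induction C using Finset.induction_on with
  | empty => simp
  | insert c C _ ih =>
    rw [Finset.union_insert]
    exact ih.trans (hδ.le_insert _ c)

theorem sup_union_le (hδ : IsDiversity δ) (𝓐 : Finset (Finset X)) {Y : Finset X}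
    (c : Finset X → X) (hc : ∀ A ∈ 𝓐, c A ∈ Y) :
    δ (𝓐.sup id ∪ Y) ≤ δ Y + ∑ A ∈ 𝓐, δ (A ∪ {c A}) := by
  induction 𝓐 using Finset.induction_on with
  | empty => simp
  | insert A 𝓑 hA ih =>
    have hcA : {c A} ∪ (𝓑.sup id ∪ Y) = 𝓑.sup id ∪ Y := by
      rw [Finset.union_eq_right, Finset.singleton_subset_iff]
      exact Finset.mem_union_right _ (hc A (Finset.mem_insert_self A 𝓑))
    have step := hδ.triangle A (𝓑.sup id ∪ Y) (B := {c A}) (by simp)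
    rw [hcA] at step
    have ih := ih fun B hB => hc B (Finset.mem_insert_of_mem hB)
    rw [Finset.sup_insert, Finset.sum_insert hA, id, Finset.sup_eq_union, Finset.union_assoc]
    linarith

theorem le_add_of_memP (hδ : IsDiversity δ) {g : Finset X → ℝ} (hg : MemP δ g)
    (A B : Finset X) : δ (A ∪ B) ≤ g A + g B := by
  have hle : ∀ C, δ C ≤ g C := fun C => by simpa using hg.2 {C}
  by_cases hAB : A = B
  · subst hAB
    rw [Finset.union_self]
    linarith [hle A, hδ.nonneg A]
  · simpa [Finset.sum_pair hAB] using hg.2 {A, B}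

theorem hfun_memP (hδ : IsDiversity δ) (x : X) : MemP δ (hfun δ x) := by
  refine ⟨by simp [hfun, hδ.apply_singleton], fun 𝓐 => ?_⟩
  calc δ (𝓐.sup id) ≤ δ (𝓐.sup id ∪ {x}) := hδ.le_union_left _ _
    _ ≤ δ {x} + ∑ A ∈ 𝓐, δ (A ∪ {x}) := hδ.sup_union_le 𝓐 (fun _ => x) (by simp)
    _ = ∑ A ∈ 𝓐, hfun δ x A := by rw [hδ.apply_singleton, zero_add]; rfl

theorem hfun_memT (hδ : IsDiversity δ) (x : X) : MemT δ (hfun δ x) := by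
  refine ⟨hδ.hfun_memP x, fun g hg hle => funext fun A => (hle A).antisymm ?_⟩
  have hgx : g {x} ≤ 0 := by simpa [hfun, hδ.apply_singleton] using hle {x}
  linarith [hδ.le_add_of_memP hg A {x}, show hfun δ x A = δ (A ∪ {x}) from rfl]

theorem hfun_injective (hδ : IsDiversity δ) : Function.Injective (hfun δ) := by
  intro x y h
  have hxy : δ ({y} ∪ {x}) = 0 := by
    simpa [hfun, hδ.apply_singleton] using congrFun h {y}
  exact Finset.card_le_one.mp ((hδ.2.1 _).mp hxy) x (by simp) y (by simp)

theorem sup_sub_sum_inf'_le (hδ : IsDiversity δ) (𝓐 : Finset (Finset X)) {Y : Finset X}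
    (hY : Y.Nonempty) :
    δ (𝓐.sup id) - ∑ A ∈ 𝓐, Y.inf' hY (fun y => δ (A ∪ {y})) ≤ δ Y := by
  choose c hcY hc using fun A : Finset X => Y.exists_mem_eq_inf' hY (fun y => δ (A ∪ {y}))
  have := hδ.sup_union_le 𝓐 c fun A _ => hcY A
  simp only [hc]
  linarith [hδ.le_union_left (𝓐.sup id) Y]

theorem inf'_union_singleton_eq_zero (hδ : IsDiversity δ) {Y : Finset X} (hY : Y.Nonempty)
    {y : X} (hy : y ∈ Y) : Y.inf' hY (fun z => δ ({y} ∪ {z})) = 0 :=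
  (Finset.inf'_le_of_le _ hy (by simp [hδ.apply_singleton])).antisymm
    (Finset.le_inf' _ _ fun _ _ => hδ.nonneg _)

/-- The supremum defining `δ_T` is attained at the collection of singletons of `Y`. -/
theorem deltaT_image_hfun (hδ : IsDiversity δ) (Y : Finset X) :
    deltaT δ (Y.image (hfun δ)) = δ Y := by
  rcases Y.eq_empty_or_nonempty with rfl | hY
  · simp [deltaT, hδ.apply_empty]
  have hinf : ∀ A, sInf ((fun f : Finset X → ℝ => f A) '' (Y.image (hfun δ) : Set _)) =
      Y.inf' hY (fun y => δ (A ∪ {y})) := fun A => by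
    rw [Finset.inf'_eq_csInf_image, Finset.coe_image, ← Set.image_comp]
    rfl
  rw [deltaT, if_neg (by simpa using hY.ne_empty)]
  simp only [hinf]
  refine IsGreatest.csSup_eq ⟨⟨Y.image singleton, ?_⟩, ?_⟩
  · rw [Finset.sup_image, Function.id_comp, Finset.sup_singleton_eq_self,
      Finset.sum_image (fun _ _ _ _ => Finset.singleton_inj.mp),
      Finset.sum_eq_zero fun y hy => hδ.inf'_union_singleton_eq_zero hY hy, sub_zero]
  · rintro _ ⟨𝓐, rfl⟩
    exact hδ.sup_sub_sum_inf'_le 𝓐 hY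

end IsDiversity

/-- `κ : x ↦ h_x` maps `X` into `T_X`, is injective, and satisfies
`δ_T (κ(Y)) = δ Y` for every finite `Y ⊆ X`; i.e. `κ` embeds `(X, δ)` into `(T_X, δ_T)`. -/
theorem kappa_embedding {X : Type*} (δ : Finset X → ℝ) (hδ : IsDiversity δ) :
    (∀ x : X, MemT δ (hfun δ x)) ∧
    Function.Injective (hfun δ) ∧
    (∀ Y : Finset X, deltaT δ (Y.image (hfun δ)) = δ Y) :=
  ⟨hδ.hfun_memT, hδ.hfun_injective, hδ.deltaT_image_hfun⟩

end
end
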